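/- Let G be a random matrix in ℝ^{m×n} with E[G] = ∇L and finite second moments, let ∇L = UΣVᵀ be a reduced SVD of ∇L, and consider the objective f(A, B) = E[‖A G B − U Vᵀ‖_F^2] over A ∈ ℝ^{m×m} and B ∈ ℝ^{n×n}. Assume E[G B Bᵀ Gᵀ] and E[Gᵀ Aᵀ A G] are invertible. Then the partial gradient of f with respect to A vanishes if and only if A = ((∇L ∇Lᵀ)^{†/2} ∇L Bᵀ ∇Lᵀ) · E[G B Bᵀ Gᵀ]^{−1}, and the partial gradient of f with respect to B vanishes if and only if B = E[Gᵀ Aᵀ A G]^{−1} · (∇Lᵀ Aᵀ ∇L (∇Lᵀ ∇L)^{†/2}). -/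

import Mathlib

open MeasureTheory Matrix

/-- The four Penrose conditions characterizing the Moore–Penrose pseudoinverse `X = P^†`
of a real matrix `P`. -/
def IsMoorePenrose {N : ℕ} (P X : Matrix (Fin N) (Fin N) ℝ) : Prop :=
  P * X * P = P ∧ X * P * X = X ∧ (P * X)ᵀ = P * X ∧ (X * P)ᵀ = X * P

/-- The square root of a positive semidefinite matrix, as `Matrix.PosSemidef.sqrt` was defined
in the older Mathlib (removed since). -/
noncomputable def Matrix.PosSemidef.sqrt {N : ℕ} {P : Matrix (Fin N) (Fin N) ℝ}
    (hP : P.PosSemidef) : Matrix (Fin N) (Fin N) ℝ :=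
  (hP.1.eigenvectorUnitary : Matrix (Fin N) (Fin N) ℝ) *
    diagonal ((↑) ∘ (√·) ∘ hP.1.eigenvalues) *
    (star hP.1.eigenvectorUnitary : Matrix (Fin N) (Fin N) ℝ)


lemma my_int_mul {Ω : Type*} [MeasurableSpace Ω] {μ : Measure Ω} {f g : Ω → ℝ}
    (hf : MemLp f 2 μ) (hg : MemLp g 2 μ) :
    Integrable (fun ω => f ω * g ω) μ := by
  have h1 := (hf.add hg).integrable_sq
  have h2 := hf.integrable_sq
  have h3 := hg.integrable_sq
  have : (fun ω => f ω * g ω)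
      = fun ω => (((f ω + g ω) ^ 2 - f ω ^ 2) - g ω ^ 2) / 2 := by
    funext ω; ring
  rw [this]
  exact (((h1.sub h2).sub h3).div_const 2)

lemma my_quad_hasDerivAt {Ω : Type*} [MeasurableSpace Ω] (μ : Measure Ω) [IsFiniteMeasure μ]
    {ι : Type*} [Fintype ι] (p q : ι → Ω → ℝ)
    (hp : ∀ i, MemLp (p i) 2 μ) (hq : ∀ i, MemLp (q i) 2 μ) :
    HasDerivAt (fun s : ℝ => ∫ ω, ∑ i, (p i ω + s * q i ω) ^ 2 ∂μ)
      (2 * ∑ i, ∫ ω, p i ω * q i ω ∂μ) 0 := by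
  have key : ∀ s : ℝ, ∫ ω, ∑ i, (p i ω + s * q i ω) ^ 2 ∂μ
      = (∑ i, ∫ ω, (p i ω) ^ 2 ∂μ) + s * (2 * ∑ i, ∫ ω, p i ω * q i ω ∂μ)
        + s ^ 2 * (∑ i, ∫ ω, (q i ω) ^ 2 ∂μ) := by
    intro s
    have hint : ∀ i : ι, Integrable
        (fun ω => (p i ω) ^ 2 + s * (2 * (p i ω * q i ω)) + s ^ 2 * (q i ω) ^ 2) μ :=
      fun i => (((hp i).integrable_sq.add
        (((my_int_mul (hp i) (hq i)).const_mul 2).const_mul s)).add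
        ((hq i).integrable_sq.const_mul (s ^ 2)))
    have e1 : ∀ (i : ι) (ω : Ω), (p i ω + s * q i ω) ^ 2
        = (p i ω) ^ 2 + s * (2 * (p i ω * q i ω)) + s ^ 2 * (q i ω) ^ 2 := by
      intro i ω; ring
    simp only [e1]
    rw [integral_finset_sum _ (fun i _ => hint i)]
    have e2 : ∀ i : ι, ∫ ω, ((p i ω) ^ 2 + s * (2 * (p i ω * q i ω)) + s ^ 2 * (q i ω) ^ 2) ∂μ
        = (∫ ω, (p i ω) ^ 2 ∂μ) + s * (2 * ∫ ω, p i ω * q i ω ∂μ)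
          + s ^ 2 * ∫ ω, (q i ω) ^ 2 ∂μ := by
      intro i
      have ia : Integrable (fun ω => (p i ω) ^ 2) μ := (hp i).integrable_sq
      have ib : Integrable (fun ω => s * (2 * (p i ω * q i ω))) μ :=
        ((my_int_mul (hp i) (hq i)).const_mul 2).const_mul s
      have ic : Integrable (fun ω => s ^ 2 * (q i ω) ^ 2) μ :=
        (hq i).integrable_sq.const_mul (s ^ 2)
      have iab : Integrable (fun ω => (p i ω) ^ 2 + s * (2 * (p i ω * q i ω))) μ := ia.add ib
      rw [integral_add iab ic, integral_add ia ib,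
        integral_const_mul, integral_const_mul, integral_const_mul]
    simp only [e2]
    rw [Finset.sum_add_distrib, Finset.sum_add_distrib, ← Finset.mul_sum, ← Finset.mul_sum,
      ← Finset.mul_sum]
  have : (fun s : ℝ => ∫ ω, ∑ i, (p i ω + s * q i ω) ^ 2 ∂μ)
      = fun s : ℝ => (∑ i, ∫ ω, (p i ω) ^ 2 ∂μ) + s * (2 * ∑ i, ∫ ω, p i ω * q i ω ∂μ)
        + s ^ 2 * (∑ i, ∫ ω, (q i ω) ^ 2 ∂μ) := funext key
  rw [this]
  have h1 : HasDerivAt (fun s : ℝ => s * (2 * ∑ i, ∫ ω, p i ω * q i ω ∂μ))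
      (2 * ∑ i, ∫ ω, p i ω * q i ω ∂μ) 0 := by
    simpa using (hasDerivAt_id (0:ℝ)).mul_const (2 * ∑ i, ∫ ω, p i ω * q i ω ∂μ)
  have h2 : HasDerivAt (fun s : ℝ => s ^ 2 * (∑ i, ∫ ω, (q i ω) ^ 2 ∂μ)) 0 (0:ℝ) := by
    simpa using (hasDerivAt_pow 2 (0:ℝ)).mul_const (∑ i, ∫ ω, (q i ω) ^ 2 ∂μ)
  have := ((hasDerivAt_const (0:ℝ) (∑ i, ∫ ω, (p i ω) ^ 2 ∂μ)).add h1).add h2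
  simp only [zero_add, add_zero] at this
  exact this


lemma my_mp_unique {N : ℕ} {P X Y : Matrix (Fin N) (Fin N) ℝ}
    (hX : IsMoorePenrose P X) (hY : IsMoorePenrose P Y) : X = Y := by
  obtain ⟨hX1, hX2, hX3, hX4⟩ := hX
  obtain ⟨hY1, hY2, hY3, hY4⟩ := hY
  have hPt1 : Pᵀ = Pᵀ * (P * Y) := by
    conv_lhs => rw [← hY1]
    rw [transpose_mul, hY3]
  have hPt2 : Pᵀ = (Y * P) * Pᵀ := by
    conv_lhs => rw [← hY1]
    rw [Matrix.mul_assoc, transpose_mul, hY4]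
  have e1 : P * X = P * Y := by
    calc P * X = Xᵀ * Pᵀ := by rw [← transpose_mul]; exact hX3.symm
    _ = Xᵀ * (Pᵀ * (P * Y)) := by rw [← hPt1]
    _ = (P * X)ᵀ * (P * Y) := by rw [← Matrix.mul_assoc, ← transpose_mul]
    _ = P * X * (P * Y) := by rw [hX3]
    _ = (P * X * P) * Y := by simp only [Matrix.mul_assoc]
    _ = P * Y := by rw [hX1]
  have e2 : X * P = Y * P := by
    calc X * P = Pᵀ * Xᵀ := by rw [← transpose_mul]; exact hX4.symm
    _ = ((Y * P) * Pᵀ) * Xᵀ := by rw [← hPt2]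
    _ = (Y * P) * (X * P)ᵀ := by rw [Matrix.mul_assoc, ← transpose_mul]
    _ = (Y * P) * (X * P) := by rw [hX4]
    _ = Y * (P * X * P) := by simp only [Matrix.mul_assoc]
    _ = Y * P := by rw [hX1]
  calc X = X * P * X := hX2.symm
  _ = X * (P * Y) := by rw [mul_assoc, e1]
  _ = (X * P) * Y := by rw [mul_assoc]
  _ = Y * P * Y := by rw [e2]
  _ = Y := hY2

lemma my_sqrt_unique {N : ℕ} {P Y : Matrix (Fin N) (Fin N) ℝ} (hP : P.PosSemidef)
    (hY : Y.PosSemidef) (h : Y ^ 2 = P) : hP.sqrt = Y := by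
  have e1 : hP.sqrt = cfc Real.sqrt P := by
    rw [hP.1.cfc_eq, IsHermitian.cfc, Unitary.conjStarAlgAut_apply]
    rfl
  have hYsa : IsSelfAdjoint Y := hY.1
  have hspec : ∀ x ∈ spectrum ℝ Y, 0 ≤ x := by
    intro x hx
    rw [hY.1.spectrum_real_eq_range_eigenvalues] at hx
    obtain ⟨i, rfl⟩ := hx
    exact hY.eigenvalues_nonneg i
  rw [e1, ← h, ← cfc_pow_id (R := ℝ) Y 2 hYsa, ← cfc_comp Real.sqrt (fun x => x ^ 2) Y]
  conv_rhs => rw [← cfc_id' (R := ℝ) (a := Y)]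
  exact cfc_congr fun x hx => by simp [Real.sqrt_sq (hspec x hx)]

lemma my_pinv_sqrt {N k : ℕ} (W : Matrix (Fin N) (Fin k) ℝ) (hW : Wᵀ * W = 1)
    (d : Fin k → ℝ) (hd : ∀ i, 0 < d i) (Pd : Matrix (Fin N) (Fin N) ℝ)
    (hPd : IsMoorePenrose (W * diagonal (fun i => d i ^ 2) * Wᵀ) Pd)
    (hpsd : Pd.PosSemidef) :
    hpsd.sqrt = W * diagonal (fun i => (d i)⁻¹) * Wᵀ := by
  have cancel : ∀ M : Matrix (Fin k) (Fin N) ℝ, Wᵀ * (W * M) = M := by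
    intro M; rw [← Matrix.mul_assoc, hW, Matrix.one_mul]
  have key : ∀ D D' : Fin k → ℝ,
      (W * diagonal D * Wᵀ) * (W * diagonal D' * Wᵀ)
        = W * (diagonal D * diagonal D') * Wᵀ := by
    intro D D'
    simp only [Matrix.mul_assoc]
    rw [cancel]
  have hdinv : ∀ D D' : Fin k → ℝ, (∀ i, D i * D' i = 1) →
      diagonal D * diagonal D' = (1 : Matrix (Fin k) (Fin k) ℝ) := by
    intro D D' h
    rw [diagonal_mul_diagonal]
    simp only [h]
    exact diagonal_one
  have hWWt : ∀ D : Fin k → ℝ,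
      (W * Wᵀ) * (W * diagonal D * Wᵀ) = W * diagonal D * Wᵀ := by
    intro D
    simp only [Matrix.mul_assoc]
    rw [cancel]
  have hWWt' : ∀ D : Fin k → ℝ,
      (W * diagonal D * Wᵀ) * (W * Wᵀ) = W * diagonal D * Wᵀ := by
    intro D
    simp only [Matrix.mul_assoc]
    rw [cancel]
  have hPX : (W * diagonal (fun i => d i ^ 2) * Wᵀ) * (W * diagonal (fun i => (d i ^ 2)⁻¹) * Wᵀ)
      = W * Wᵀ := by
    rw [key, hdinv _ _ fun i => mul_inv_cancel₀ (pow_ne_zero _ (hd i).ne'), Matrix.mul_one]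
  have hXP : (W * diagonal (fun i => (d i ^ 2)⁻¹) * Wᵀ) * (W * diagonal (fun i => d i ^ 2) * Wᵀ)
      = W * Wᵀ := by
    rw [key, hdinv _ _ fun i => inv_mul_cancel₀ (pow_ne_zero _ (hd i).ne'), Matrix.mul_one]
  have hXmp : IsMoorePenrose (W * diagonal (fun i => d i ^ 2) * Wᵀ)
      (W * diagonal (fun i => (d i ^ 2)⁻¹) * Wᵀ) := by
    refine ⟨?_, ?_, ?_, ?_⟩
    · rw [hPX, hWWt]
    · rw [hXP, hWWt]
    · rw [hPX, transpose_mul, transpose_transpose]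
    · rw [hXP, transpose_mul, transpose_transpose]
  have hPdX : Pd = W * diagonal (fun i => (d i ^ 2)⁻¹) * Wᵀ := my_mp_unique hPd hXmp
  have hYpsd : (W * diagonal (fun i => (d i)⁻¹) * Wᵀ).PosSemidef := by
    have h1 : PosSemidef (diagonal (fun i => (d i)⁻¹) : Matrix (Fin k) (Fin k) ℝ) :=
      posSemidef_diagonal_iff.mpr fun i => (inv_pos.mpr (hd i)).le
    have := h1.mul_mul_conjTranspose_same W
    rwa [conjTranspose_eq_transpose_of_trivial] at this
  have hYsq : (W * diagonal (fun i => (d i)⁻¹) * Wᵀ) ^ 2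
      = W * diagonal (fun i => (d i ^ 2)⁻¹) * Wᵀ := by
    rw [pow_two, key, diagonal_mul_diagonal]
    have : (fun i => (d i)⁻¹ * (d i)⁻¹) = fun i => (d i ^ 2)⁻¹ := by
      funext i; rw [pow_two, mul_inv]
    rw [this]
  exact my_sqrt_unique hpsd hYpsd (by rw [hYsq, hPdX])

lemma my_memLp_entry {Ω : Type*} [MeasurableSpace Ω] {μ : Measure Ω}
    {m n m' n' : ℕ} {G : Ω → Matrix (Fin m) (Fin n) ℝ}
    (hg : ∀ i j, MemLp (fun ω => G ω i j) 2 μ)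
    (X : Matrix (Fin m') (Fin m) ℝ) (Y : Matrix (Fin n) (Fin n') ℝ)
    (i : Fin m') (j : Fin n') :
    MemLp (fun ω => (X * G ω * Y) i j) 2 μ := by
  have e : (fun ω => (X * G ω * Y) i j) = fun ω => ∑ b, ∑ a, (X i a * Y b j) * G ω a b := by
    funext ω
    rw [Matrix.mul_apply]
    simp only [Matrix.mul_apply, Finset.sum_mul]
    exact Finset.sum_congr rfl fun b _ => Finset.sum_congr rfl fun a _ => by ring
  rw [e]
  exact memLp_finset_sum _ fun b _ => memLp_finset_sum _ fun a _ => (hg a b).const_mul _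

lemma my_sum_std {m n : ℕ} (M : Matrix (Fin m) (Fin n) ℝ) (i : Fin m) (a : Fin n) :
    ∑ i', ∑ a', Matrix.single i a (1:ℝ) i' a' * M i' a' = M i a := by
  simp only [Matrix.single_apply, ite_mul, one_mul, zero_mul]
  rw [Finset.sum_eq_single i]
  · rw [Finset.sum_eq_single a]
    · simp
    · intro b _ hb; simp [hb.symm]
    · intro h; exact absurd (Finset.mem_univ a) h
  · intro b _ hb
    apply Finset.sum_eq_zero
    intro c _
    simp [hb.symm]
  · intro h; exact absurd (Finset.mem_univ i) h

/-- **Stationarity conditions for the two-sided adaptation objective.**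
Let `G` be a random `m × n` matrix with `E[G] = ∇L` and finite second moments, let
`∇L = U Σ Vᵀ` be a reduced SVD, and consider `f(A, B) = E[‖A G B − U Vᵀ‖_F²]`.  Assume
`E[G B Bᵀ Gᵀ]` and `E[Gᵀ Aᵀ A G]` are invertible.  Then the partial gradient of `f` with
respect to `A` (expressed via directional derivatives) vanishes iff
`A = ((∇L ∇Lᵀ)^{†/2} ∇L Bᵀ ∇Lᵀ) · E[G B Bᵀ Gᵀ]⁻¹`, and the partial gradient with respect to
`B` vanishes iff `B = E[Gᵀ Aᵀ A G]⁻¹ · (∇Lᵀ Aᵀ ∇L (∇Lᵀ ∇L)^{†/2})`. -/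
theorem statement16 {Ω : Type*} [MeasurableSpace Ω] (μ : Measure Ω) [IsProbabilityMeasure μ]
    {m n k : ℕ} (G : Ω → Matrix (Fin m) (Fin n) ℝ)
    (gradL : Matrix (Fin m) (Fin n) ℝ)
    (hg : ∀ i j, MemLp (fun ω => G ω i j) 2 μ)
    (hmean : ∀ i j, ∫ ω, G ω i j ∂μ = gradL i j)
    (U : Matrix (Fin m) (Fin k) ℝ) (S : Matrix (Fin k) (Fin k) ℝ)
    (V : Matrix (Fin n) (Fin k) ℝ)
    (hU : Uᵀ * U = 1) (hV : Vᵀ * V = 1)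
    (hSdiag : ∀ i j, i ≠ j → S i j = 0) (hSpos : ∀ i, 0 < S i i)
    (hSVD : gradL = U * S * Vᵀ)
    -- pseudoinverses defining `(∇L ∇Lᵀ)^{†/2}` and `(∇Lᵀ ∇L)^{†/2}`
    (Pdag : Matrix (Fin m) (Fin m) ℝ)
    (hPdag : IsMoorePenrose (gradL * gradLᵀ) Pdag) (hPdagPsd : Pdag.PosSemidef)
    (Qdag : Matrix (Fin n) (Fin n) ℝ)
    (hQdag : IsMoorePenrose (gradLᵀ * gradL) Qdag) (hQdagPsd : Qdag.PosSemidef)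
    (A : Matrix (Fin m) (Fin m) ℝ) (B : Matrix (Fin n) (Fin n) ℝ)
    (EB : Matrix (Fin m) (Fin m) ℝ)
    (hEB : ∀ i i', EB i i' = ∫ ω, (G ω * B * Bᵀ * (G ω)ᵀ) i i' ∂μ)
    (hEBinv : IsUnit EB.det)
    (EA : Matrix (Fin n) (Fin n) ℝ)
    (hEA : ∀ j j', EA j j' = ∫ ω, ((G ω)ᵀ * Aᵀ * A * G ω) j j' ∂μ)
    (hEAinv : IsUnit EA.det)
    (f : Matrix (Fin m) (Fin m) ℝ → Matrix (Fin n) (Fin n) ℝ → ℝ)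
    (hf : ∀ A' B', f A' B' = ∫ ω, ∑ i, ∑ j, ((A' * G ω * B' - U * Vᵀ) i j) ^ 2 ∂μ) :
    ((∀ H : Matrix (Fin m) (Fin m) ℝ,
        HasDerivAt (fun s : ℝ => f (A + s • H) B) 0 0) ↔
      A = hPdagPsd.sqrt * gradL * Bᵀ * gradLᵀ * EB⁻¹) ∧
    ((∀ H : Matrix (Fin n) (Fin n) ℝ,
        HasDerivAt (fun s : ℝ => f A (B + s • H)) 0 0) ↔
      B = EA⁻¹ * (gradLᵀ * Aᵀ * gradL * hQdagPsd.sqrt)) := by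
  classical
  -- notation
  set d : Fin k → ℝ := fun i => S i i with hd_def
  have hSd : S = diagonal d := by
    ext i j
    by_cases h : i = j
    · subst h; simp [diagonal, hd_def]
    · rw [diagonal_apply_ne _ h]; exact hSdiag i j h
  have cancelU : ∀ {r : ℕ} (M : Matrix (Fin k) (Fin r) ℝ), Uᵀ * (U * M) = M := by
    intro r M; rw [← Matrix.mul_assoc, hU, Matrix.one_mul]
  have cancelV : ∀ {r : ℕ} (M : Matrix (Fin k) (Fin r) ℝ), Vᵀ * (V * M) = M := by
    intro r M; rw [← Matrix.mul_assoc, hV, Matrix.one_mul]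
  have hdd : diagonal (fun i => (d i)⁻¹) * diagonal d = (1 : Matrix (Fin k) (Fin k) ℝ) := by
    rw [diagonal_mul_diagonal]
    have e : (fun i => (d i)⁻¹ * d i) = fun _ => (1:ℝ) :=
      funext fun i => inv_mul_cancel₀ (hSpos i).ne'
    rw [e, diagonal_one]
  have hdd' : diagonal d * diagonal (fun i => (d i)⁻¹) = (1 : Matrix (Fin k) (Fin k) ℝ) := by
    rw [diagonal_mul_diagonal]
    have e : (fun i => d i * (d i)⁻¹) = fun _ => (1:ℝ) :=
      funext fun i => mul_inv_cancel₀ (hSpos i).ne'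
    rw [e, diagonal_one]
  have hgradT : gradLᵀ = V * diagonal d * Uᵀ := by
    rw [hSVD, hSd, transpose_mul, transpose_mul, transpose_transpose, diagonal_transpose,
      Matrix.mul_assoc]
  have hPP : gradL * gradLᵀ = U * diagonal (fun i => d i ^ 2) * Uᵀ := by
    rw [hgradT, hSVD, hSd]
    simp only [Matrix.mul_assoc]
    rw [cancelV, ← Matrix.mul_assoc (diagonal d), diagonal_mul_diagonal]
    have e : (fun i => d i * d i) = fun i => d i ^ 2 := funext fun i => (sq (d i)).symm
    rw [e]
  have hQQ : gradLᵀ * gradL = V * diagonal (fun i => d i ^ 2) * Vᵀ := by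
    rw [hgradT, hSVD, hSd]
    simp only [Matrix.mul_assoc]
    rw [cancelU, ← Matrix.mul_assoc (diagonal d), diagonal_mul_diagonal]
    have e : (fun i => d i * d i) = fun i => d i ^ 2 := funext fun i => (sq (d i)).symm
    rw [e]
  have hsqP : hPdagPsd.sqrt = U * diagonal (fun i => (d i)⁻¹) * Uᵀ :=
    my_pinv_sqrt U hU d hSpos Pdag (hPP ▸ hPdag) hPdagPsd
  have hsqQ : hQdagPsd.sqrt = V * diagonal (fun i => (d i)⁻¹) * Vᵀ :=
    my_pinv_sqrt V hV d hSpos Qdag (hQQ ▸ hQdag) hQdagPsd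
  have hsqA : hPdagPsd.sqrt * gradL = U * Vᵀ := by
    rw [hsqP, hSVD, hSd]
    simp only [Matrix.mul_assoc]
    rw [cancelU, ← Matrix.mul_assoc (diagonal _), hdd, Matrix.one_mul]
  have hsqB : gradL * hQdagPsd.sqrt = U * Vᵀ := by
    rw [hsqQ, hSVD, hSd]
    simp only [Matrix.mul_assoc]
    rw [cancelV, ← Matrix.mul_assoc (diagonal _), hdd', Matrix.one_mul]
  -- the residual function
  set p : Fin m × Fin n → Ω → ℝ :=
    fun ij ω => (A * G ω * B - U * Vᵀ) ij.1 ij.2 with hp_def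
  have hAB : ∀ i j, MemLp (fun ω => (A * G ω * B) i j) 2 μ := fun i j =>
    my_memLp_entry hg A B i j
  have hp : ∀ ij, MemLp (p ij) 2 μ := by
    intro ij
    have h1 := (hAB ij.1 ij.2).sub (memLp_const ((U * Vᵀ) ij.1 ij.2))
    have e : p ij = fun ω => (A * G ω * B) ij.1 ij.2 - (U * Vᵀ) ij.1 ij.2 := by
      funext ω; simp [hp_def, Matrix.sub_apply]
    rw [e]
    exact h1
  have hGB : ∀ a j, MemLp (fun ω => (G ω * B) a j) 2 μ := by
    intro a j
    have := my_memLp_entry hg (1 : Matrix (Fin m) (Fin m) ℝ) B a j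
    simpa only [Matrix.one_mul] using this
  have hAG : ∀ i b, MemLp (fun ω => (A * G ω) i b) 2 μ := by
    intro i b
    have := my_memLp_entry hg A (1 : Matrix (Fin n) (Fin n) ℝ) i b
    simpa only [Matrix.mul_one] using this
  have hGint : ∀ a b, Integrable (fun ω => G ω a b) μ := fun a b => (hg a b).integrable one_le_two
  -- expectations of linear functionals
  have hEGB : ∀ a j, ∫ ω, (G ω * B) a j ∂μ = (gradL * B) a j := by
    intro a j
    have e : (fun ω => (G ω * B) a j) = fun ω => ∑ b, G ω a b * B b j := by
      funext ω; rw [Matrix.mul_apply]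
    rw [e, integral_finset_sum _ (fun b _ => (hGint a b).mul_const _), Matrix.mul_apply]
    exact Finset.sum_congr rfl fun b _ => by rw [integral_mul_const, hmean]
  have hEAG : ∀ i b, ∫ ω, (A * G ω) i b ∂μ = (A * gradL) i b := by
    intro i b
    have e : (fun ω => (A * G ω) i b) = fun ω => ∑ c, A i c * G ω c b := by
      funext ω; rw [Matrix.mul_apply]
    rw [e, integral_finset_sum _ (fun c _ => (hGint c b).const_mul _), Matrix.mul_apply]
    exact Finset.sum_congr rfl fun c _ => by rw [integral_const_mul, hmean]
  ------------------------------------------------------------------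
  -- SIDE A
  ------------------------------------------------------------------
  set MA : Matrix (Fin m) (Fin m) ℝ := A * EB - U * Vᵀ * Bᵀ * gradLᵀ with hMA_def
  have hderivA : ∀ H : Matrix (Fin m) (Fin m) ℝ,
      HasDerivAt (fun s : ℝ => f (A + s • H) B)
        (2 * ∑ ij : Fin m × Fin n, ∫ ω, p ij ω * (H * G ω * B) ij.1 ij.2 ∂μ) 0 := by
    intro H
    have hq : ∀ ij : Fin m × Fin n, MemLp (fun ω => (H * G ω * B) ij.1 ij.2) 2 μ :=
      fun ij => my_memLp_entry hg H B ij.1 ij.2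
    have hfe : (fun s : ℝ => f (A + s • H) B)
        = fun s : ℝ => ∫ ω, ∑ ij : Fin m × Fin n,
            (p ij ω + s * (H * G ω * B) ij.1 ij.2) ^ 2 ∂μ := by
      funext s
      rw [hf]
      congr 1
      funext ω
      rw [Fintype.sum_prod_type]
      apply Finset.sum_congr rfl
      intro i _
      apply Finset.sum_congr rfl
      intro j _
      have e1 : (A + s • H) * G ω * B = A * G ω * B + s • (H * G ω * B) := by
        rw [Matrix.add_mul, Matrix.add_mul, Matrix.smul_mul, Matrix.smul_mul]
      rw [e1]
      simp only [hp_def, Matrix.sub_apply, Matrix.add_apply, Matrix.smul_apply, smul_eq_mul]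
      ring
    rw [hfe]
    exact my_quad_hasDerivAt μ p (fun ij ω => (H * G ω * B) ij.1 ij.2) hp hq
  have hRA : ∀ i a, ∑ j, ∫ ω, p (i, j) ω * (G ω * B) a j ∂μ = MA i a := by
    intro i a
    have e1 : ∀ j, ∫ ω, p (i, j) ω * (G ω * B) a j ∂μ
        = ∫ ω, (A * G ω * B) i j * (G ω * B) a j ∂μ - (U * Vᵀ) i j * (gradL * B) a j := by
      intro j
      have e : (fun ω => p (i, j) ω * (G ω * B) a j)
          = fun ω => (A * G ω * B) i j * (G ω * B) a j
              - (U * Vᵀ) i j * (G ω * B) a j := by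
        funext ω; simp only [hp_def, Matrix.sub_apply]; ring
      rw [e, integral_sub (my_int_mul (hAB i j) (hGB a j))
        (((hGB a j).integrable one_le_two).const_mul _), integral_const_mul, hEGB]
    simp only [e1]
    rw [Finset.sum_sub_distrib]
    congr 1
    · -- ∑ j ∫ (AGB) i j (GB) a j = (A * EB) i a
      have e2 : ∀ j, ∫ ω, (A * G ω * B) i j * (G ω * B) a j ∂μ
          = ∑ c, A i c * ∫ ω, (G ω * B) c j * (G ω * B) a j ∂μ := by
        intro j
        have e : (fun ω => (A * G ω * B) i j * (G ω * B) a j)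
            = fun ω => ∑ c, A i c * ((G ω * B) c j * (G ω * B) a j) := by
          funext ω
          rw [Matrix.mul_assoc, Matrix.mul_apply, Finset.sum_mul]
          exact Finset.sum_congr rfl fun c _ => by ring
        rw [e, integral_finset_sum _
          (fun c _ => (my_int_mul (hGB c j) (hGB a j)).const_mul _)]
        exact Finset.sum_congr rfl fun c _ => integral_const_mul _ _
      simp only [e2]
      rw [Finset.sum_comm, Matrix.mul_apply (M := A) (N := EB)]
      apply Finset.sum_congr rfl
      intro c _
      rw [← Finset.mul_sum]
      congr 1
      rw [hEB]
      have e3 : (fun ω => (G ω * B * Bᵀ * (G ω)ᵀ) c a)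
          = fun ω => ∑ j, (G ω * B) c j * (G ω * B) a j := by
        funext ω
        rw [show G ω * B * Bᵀ * (G ω)ᵀ = (G ω * B) * (G ω * B)ᵀ by
          rw [transpose_mul, Matrix.mul_assoc], Matrix.mul_apply]
        exact Finset.sum_congr rfl fun j _ => by rw [transpose_apply]
      rw [e3, integral_finset_sum _ (fun j _ => my_int_mul (hGB c j) (hGB a j))]
    · -- ∑ j (UVᵀ) i j (gradL B) a j = (UVᵀBᵀgradLᵀ) i a
      rw [show U * Vᵀ * Bᵀ * gradLᵀ = (U * Vᵀ) * (gradL * B)ᵀ by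
        rw [transpose_mul, Matrix.mul_assoc], Matrix.mul_apply]
      exact Finset.sum_congr rfl fun j _ => by rw [transpose_apply]
  have hC1A : ∀ H : Matrix (Fin m) (Fin m) ℝ,
      ∑ ij : Fin m × Fin n, ∫ ω, p ij ω * (H * G ω * B) ij.1 ij.2 ∂μ
        = ∑ i, ∑ a, H i a * MA i a := by
    intro H
    rw [Fintype.sum_prod_type]
    have e1 : ∀ (i : Fin m) (j : Fin n), ∫ ω, p (i, j) ω * (H * G ω * B) i j ∂μ
        = ∑ a, H i a * ∫ ω, p (i, j) ω * (G ω * B) a j ∂μ := by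
      intro i j
      have e : (fun ω => p (i, j) ω * (H * G ω * B) i j)
          = fun ω => ∑ a, H i a * (p (i, j) ω * (G ω * B) a j) := by
        funext ω
        rw [Matrix.mul_assoc, Matrix.mul_apply (M := H), Finset.mul_sum]
        exact Finset.sum_congr rfl fun a _ => by ring
      rw [e, integral_finset_sum _
        (fun a _ => (my_int_mul (hp (i, j)) (hGB a j)).const_mul _)]
      exact Finset.sum_congr rfl fun a _ => integral_const_mul _ _
    apply Finset.sum_congr rfl
    intro i _
    simp only [e1]
    rw [Finset.sum_comm]
    apply Finset.sum_congr rfl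
    intro a _
    rw [← Finset.mul_sum, hRA]
  have sideA : (∀ H : Matrix (Fin m) (Fin m) ℝ,
      HasDerivAt (fun s : ℝ => f (A + s • H) B) 0 0) ↔
      A = hPdagPsd.sqrt * gradL * Bᵀ * gradLᵀ * EB⁻¹ := by
    constructor
    · intro h
      have hMA0 : MA = 0 := by
        ext i a
        have h1 := (hderivA (Matrix.single i a 1)).unique (h (Matrix.single i a 1))
        rw [hC1A, my_sum_std] at h1
        have : MA i a = 0 := by linarith
        simpa using this
      have hAEB : A * EB = U * Vᵀ * Bᵀ * gradLᵀ := by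
        have := sub_eq_zero.mp hMA0
        exact this
      calc A = A * (EB * EB⁻¹) := by rw [Matrix.mul_nonsing_inv _ hEBinv, Matrix.mul_one]
      _ = (A * EB) * EB⁻¹ := by rw [Matrix.mul_assoc]
      _ = U * Vᵀ * Bᵀ * gradLᵀ * EB⁻¹ := by rw [hAEB]
      _ = hPdagPsd.sqrt * gradL * Bᵀ * gradLᵀ * EB⁻¹ := by rw [hsqA]
    · intro hA H
      have hMA0 : MA = 0 := by
        rw [hMA_def, sub_eq_zero, hA, ← hsqA]
        calc hPdagPsd.sqrt * gradL * Bᵀ * gradLᵀ * EB⁻¹ * EB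
            = hPdagPsd.sqrt * gradL * Bᵀ * gradLᵀ * (EB⁻¹ * EB) := by
              simp only [Matrix.mul_assoc]
        _ = hPdagPsd.sqrt * gradL * Bᵀ * gradLᵀ := by
              rw [Matrix.nonsing_inv_mul _ hEBinv, Matrix.mul_one]
      have := hderivA H
      rw [hC1A, hMA0] at this
      simpa using this
  ------------------------------------------------------------------
  -- SIDE B
  ------------------------------------------------------------------
  set MB : Matrix (Fin n) (Fin n) ℝ := EA * B - gradLᵀ * Aᵀ * (U * Vᵀ) with hMB_def
  have hderivB : ∀ H : Matrix (Fin n) (Fin n) ℝ,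
      HasDerivAt (fun s : ℝ => f A (B + s • H))
        (2 * ∑ ij : Fin m × Fin n, ∫ ω, p ij ω * (A * G ω * H) ij.1 ij.2 ∂μ) 0 := by
    intro H
    have hq : ∀ ij : Fin m × Fin n, MemLp (fun ω => (A * G ω * H) ij.1 ij.2) 2 μ :=
      fun ij => my_memLp_entry hg A H ij.1 ij.2
    have hfe : (fun s : ℝ => f A (B + s • H))
        = fun s : ℝ => ∫ ω, ∑ ij : Fin m × Fin n,
            (p ij ω + s * (A * G ω * H) ij.1 ij.2) ^ 2 ∂μ := by
      funext s
      rw [hf]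
      congr 1
      funext ω
      rw [Fintype.sum_prod_type]
      apply Finset.sum_congr rfl
      intro i _
      apply Finset.sum_congr rfl
      intro j _
      have e1 : A * G ω * (B + s • H) = A * G ω * B + s • (A * G ω * H) := by
        rw [Matrix.mul_add, Matrix.mul_smul]
      rw [e1]
      simp only [hp_def, Matrix.sub_apply, Matrix.add_apply, Matrix.smul_apply, smul_eq_mul]
      ring
    rw [hfe]
    exact my_quad_hasDerivAt μ p (fun ij ω => (A * G ω * H) ij.1 ij.2) hp hq
  have hRB : ∀ (b : Fin n) (j : Fin n),
      ∑ i, ∫ ω, p (i, j) ω * (A * G ω) i b ∂μ = MB b j := by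
    intro b j
    have e1 : ∀ i, ∫ ω, p (i, j) ω * (A * G ω) i b ∂μ
        = ∫ ω, (A * G ω * B) i j * (A * G ω) i b ∂μ - (U * Vᵀ) i j * (A * gradL) i b := by
      intro i
      have e : (fun ω => p (i, j) ω * (A * G ω) i b)
          = fun ω => (A * G ω * B) i j * (A * G ω) i b
              - (U * Vᵀ) i j * (A * G ω) i b := by
        funext ω; simp only [hp_def, Matrix.sub_apply]; ring
      rw [e, integral_sub (my_int_mul (hAB i j) (hAG i b))
        (((hAG i b).integrable one_le_two).const_mul _), integral_const_mul, hEAG]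
    simp only [e1]
    rw [Finset.sum_sub_distrib]
    congr 1
    · -- ∑ i ∫ (AGB) i j (AG) i b = (EA * B) b j
      have e2 : ∀ i, ∫ ω, (A * G ω * B) i j * (A * G ω) i b ∂μ
          = ∑ c, B c j * ∫ ω, (A * G ω) i c * (A * G ω) i b ∂μ := by
        intro i
        have e : (fun ω => (A * G ω * B) i j * (A * G ω) i b)
            = fun ω => ∑ c, B c j * ((A * G ω) i c * (A * G ω) i b) := by
          funext ω
          rw [Matrix.mul_apply (M := A * G ω) (N := B), Finset.sum_mul]
          exact Finset.sum_congr rfl fun c _ => by ring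
        rw [e, integral_finset_sum _
          (fun c _ => (my_int_mul (hAG i c) (hAG i b)).const_mul _)]
        exact Finset.sum_congr rfl fun c _ => integral_const_mul _ _
      simp only [e2]
      rw [Finset.sum_comm, Matrix.mul_apply (M := EA) (N := B)]
      apply Finset.sum_congr rfl
      intro c _
      rw [← Finset.mul_sum, mul_comm (B c j)]
      congr 1
      rw [hEA]
      have e3 : (fun ω => ((G ω)ᵀ * Aᵀ * A * G ω) b c)
          = fun ω => ∑ i, (A * G ω) i c * (A * G ω) i b := by
        funext ω
        rw [show (G ω)ᵀ * Aᵀ * A * G ω = (A * G ω)ᵀ * (A * G ω) by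
          rw [transpose_mul, Matrix.mul_assoc], Matrix.mul_apply]
        exact Finset.sum_congr rfl fun i _ => by rw [transpose_apply]; ring
      rw [e3, integral_finset_sum _ (fun i _ => my_int_mul (hAG i c) (hAG i b))]
    · -- ∑ i (UVᵀ) i j (A gradL) i b = (gradLᵀ Aᵀ (UVᵀ)) b j
      rw [show gradLᵀ * Aᵀ * (U * Vᵀ) = (A * gradL)ᵀ * (U * Vᵀ) by rw [transpose_mul],
        Matrix.mul_apply]
      exact Finset.sum_congr rfl fun i _ => by rw [transpose_apply]; ring
  have hC1B : ∀ H : Matrix (Fin n) (Fin n) ℝ,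
      ∑ ij : Fin m × Fin n, ∫ ω, p ij ω * (A * G ω * H) ij.1 ij.2 ∂μ
        = ∑ b, ∑ j, H b j * MB b j := by
    intro H
    rw [Fintype.sum_prod_type]
    have e1 : ∀ (i : Fin m) (j : Fin n), ∫ ω, p (i, j) ω * (A * G ω * H) i j ∂μ
        = ∑ b, H b j * ∫ ω, p (i, j) ω * (A * G ω) i b ∂μ := by
      intro i j
      have e : (fun ω => p (i, j) ω * (A * G ω * H) i j)
          = fun ω => ∑ b, H b j * (p (i, j) ω * (A * G ω) i b) := by
        funext ω
        rw [Matrix.mul_apply (M := A * G ω) (N := H), Finset.mul_sum]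
        exact Finset.sum_congr rfl fun b _ => by ring
      rw [e, integral_finset_sum _
        (fun b _ => (my_int_mul (hp (i, j)) (hAG i b)).const_mul _)]
      exact Finset.sum_congr rfl fun b _ => integral_const_mul _ _
    calc ∑ i, ∑ j, ∫ ω, p (i, j) ω * (A * G ω * H) i j ∂μ
        = ∑ i, ∑ j, ∑ b, H b j * ∫ ω, p (i, j) ω * (A * G ω) i b ∂μ := by
          exact Finset.sum_congr rfl fun i _ => Finset.sum_congr rfl fun j _ => e1 i j
    _ = ∑ b, ∑ j, H b j * MB b j := by
          rw [Finset.sum_comm]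
          conv_rhs => rw [Finset.sum_comm]
          apply Finset.sum_congr rfl
          intro j _
          rw [Finset.sum_comm]
          apply Finset.sum_congr rfl
          intro b _
          rw [← Finset.mul_sum, hRB]
  have sideB : (∀ H : Matrix (Fin n) (Fin n) ℝ,
      HasDerivAt (fun s : ℝ => f A (B + s • H)) 0 0) ↔
      B = EA⁻¹ * (gradLᵀ * Aᵀ * gradL * hQdagPsd.sqrt) := by
    have htarget : gradLᵀ * Aᵀ * gradL * hQdagPsd.sqrt = gradLᵀ * Aᵀ * (U * Vᵀ) := by
      rw [Matrix.mul_assoc, hsqB]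
    constructor
    · intro h
      have hMB0 : MB = 0 := by
        ext b j
        have h1 := (hderivB (Matrix.single b j 1)).unique (h (Matrix.single b j 1))
        rw [hC1B, my_sum_std] at h1
        have : MB b j = 0 := by linarith
        simpa using this
      have hEAB : EA * B = gradLᵀ * Aᵀ * (U * Vᵀ) := sub_eq_zero.mp hMB0
      calc B = (EA⁻¹ * EA) * B := by rw [Matrix.nonsing_inv_mul _ hEAinv, Matrix.one_mul]
      _ = EA⁻¹ * (EA * B) := by rw [Matrix.mul_assoc]
      _ = EA⁻¹ * (gradLᵀ * Aᵀ * (U * Vᵀ)) := by rw [hEAB]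
      _ = EA⁻¹ * (gradLᵀ * Aᵀ * gradL * hQdagPsd.sqrt) := by rw [htarget]
    · intro hB H
      have hMB0 : MB = 0 := by
        rw [hMB_def, sub_eq_zero, hB, htarget]
        calc EA * (EA⁻¹ * (gradLᵀ * Aᵀ * (U * Vᵀ)))
            = (EA * EA⁻¹) * (gradLᵀ * Aᵀ * (U * Vᵀ)) := by rw [← Matrix.mul_assoc]
        _ = gradLᵀ * Aᵀ * (U * Vᵀ) := by
              rw [Matrix.mul_nonsing_inv _ hEAinv, Matrix.one_mul]
      have := hderivB H
      rw [hC1B, hMB0] at this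
      simpa using this
  exact ⟨sideA, sideB⟩
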